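/- Let H1, H2, H3 be complex Hilbert spaces, A ∈ L(H2,H3), B ∈ L(H1,H3) with AA* ≥ BB*, and let X1, X2 be the unique contractions with (AA*)^{1/2}X1 = B, (AA*)^{1/2}X2 = A, Ker X1 = Ker B, Ker X2 = Ker A. Then for every contraction K from closure(Ran(I − X1*X1)) into closure(Ran(I − X2*X2)) and the corresponding solution X = X2*X1 + (I − X2*X2)^{1/2} K (I − X1*X1)^{1/2} of AX = B, ‖X‖ ≤ 1, one has ‖Xh‖² = ‖X2*X1 h‖² + ‖(I − X2*X2)^{1/2} K (I − X1*X1)^{1/2} h‖² for every h ∈ H1; consequently X = X2*X1 is the minimal-norm solution of the problem AX = B, ‖X‖ ≤ 1. -/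
import Mathlib


open ContinuousLinearMap
open scoped InnerProductSpace ComplexOrder

set_option maxHeartbeats 2000000 in
/-- In the setting of the Douglas-lemma parametrization: for every
contraction `K` from `closure Ran(I − X1*X1)` into `closure Ran(I − X2*X2)` and the
corresponding solution `X = X2*X1 + (I − X2*X2)^{1/2} K (I − X1*X1)^{1/2}` of
`AX = B`, `‖X‖ ≤ 1`, one has
`‖Xh‖² = ‖X2*X1 h‖² + ‖(I − X2*X2)^{1/2} K (I − X1*X1)^{1/2} h‖²` for all `h ∈ H1`;
consequently `X2*X1` is the minimal-norm solution of `AX = B`, `‖X‖ ≤ 1`. -/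
theorem stmt2
    {H1 H2 H3 : Type*}
    [NormedAddCommGroup H1] [InnerProductSpace ℂ H1] [CompleteSpace H1]
    [NormedAddCommGroup H2] [InnerProductSpace ℂ H2] [CompleteSpace H2]
    [NormedAddCommGroup H3] [InnerProductSpace ℂ H3] [CompleteSpace H3]
    (A : H2 →L[ℂ] H3) (B : H1 →L[ℂ] H3)
    (hAB : (A ∘L adjoint A - B ∘L adjoint B).IsPositive)
    -- `R` is the positive square root of `AA*`
    (R : H3 →L[ℂ] H3) (hRpos : R.IsPositive) (hRsq : R ∘L R = A ∘L adjoint A)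
    -- the contractions `X1`, `X2` of the Douglas lemma, mapping into `closure (Ran A)`
    (X1 : H1 →L[ℂ] H3) (X2 : H2 →L[ℂ] H3)
    (hX1ran : ∀ h : H1, X1 h ∈ closure (Set.range A))
    (hX2ran : ∀ h : H2, X2 h ∈ closure (Set.range A))
    (hX1norm : ‖X1‖ ≤ 1) (hX2norm : ‖X2‖ ≤ 1)
    (hX1fac : R ∘L X1 = B) (hX2fac : R ∘L X2 = A)
    (hX1ker : ∀ h : H1, X1 h = 0 ↔ B h = 0)
    (hX2ker : ∀ h : H2, X2 h = 0 ↔ A h = 0)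
    -- the positive square roots `D1 = (I − X1*X1)^{1/2}`, `D2 = (I − X2*X2)^{1/2}`
    (D1 : H1 →L[ℂ] H1) (hD1pos : D1.IsPositive)
    (hD1sq : D1 ∘L D1 = 1 - adjoint X1 ∘L X1)
    (D2 : H2 →L[ℂ] H2) (hD2pos : D2.IsPositive)
    (hD2sq : D2 ∘L D2 = 1 - adjoint X2 ∘L X2) :
    (∀ K : H1 →L[ℂ] H2,
      ‖K‖ ≤ 1 →
      (∀ h : H1,
        (∀ g ∈ Set.range ⇑(1 - adjoint X1 ∘L X1), ⟪g, h⟫_ℂ = 0) → K h = 0) →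
      (∀ h : H1, K h ∈ closure (Set.range ⇑(1 - adjoint X2 ∘L X2))) →
      ∀ h : H1,
        ‖(adjoint X2 ∘L X1 + D2 ∘L K ∘L D1) h‖ ^ 2
          = ‖adjoint X2 (X1 h)‖ ^ 2 + ‖D2 (K (D1 h))‖ ^ 2)
    ∧
    -- `X2*X1` is the minimal-norm solution
    (A ∘L (adjoint X2 ∘L X1) = B ∧ ‖adjoint X2 ∘L X1‖ ≤ 1 ∧
      ∀ X' : H1 →L[ℂ] H2, A ∘L X' = B → ‖X'‖ ≤ 1 →
        ‖adjoint X2 ∘L X1‖ ≤ ‖X'‖) := by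
  have hRadj : adjoint R = R := isSelfAdjoint_iff'.mp hRpos.isSelfAdjoint
  have hD2adj : adjoint D2 = D2 := isSelfAdjoint_iff'.mp hD2pos.isSelfAdjoint
  have hRinner : ∀ (x z : H3), ⟪R x, z⟫_ℂ = ⟪x, R z⟫_ℂ := by
    intro x z
    conv_lhs => rw [← hRadj]
    exact adjoint_inner_left R z x
  have hD2inner : ∀ (x z : H2), ⟪D2 x, z⟫_ℂ = ⟪x, D2 z⟫_ℂ := by
    intro x z
    conv_lhs => rw [← hD2adj]
    exact adjoint_inner_left D2 z x
  have hAx : ∀ x : H2, A x = R (X2 x) := by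
    intro x; rw [← hX2fac]; rfl
  -- Lemma A: elements of closure (range A) are orthogonal to ker R
  have hAorth : ∀ u ∈ closure (Set.range ⇑A), ∀ z : H3, R z = 0 → ⟪u, z⟫_ℂ = 0 := by
    intro u hu z hz
    have hsub : Set.range ⇑A ⊆ {w : H3 | ⟪w, z⟫_ℂ = 0} := by
      rintro _ ⟨x, rfl⟩
      show ⟪A x, z⟫_ℂ = 0
      rw [hAx, hRinner, hz, inner_zero_right]
    have hclosed : IsClosed {w : H3 | ⟪w, z⟫_ℂ = 0} :=
      isClosed_eq (continuous_id.inner continuous_const) continuous_const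
    exact closure_minimal hsub hclosed hu
  -- Lemma B: R (X2 X2* v - v) = 0 for v in closure (range A)
  have hRz : ∀ v ∈ closure (Set.range ⇑A), R (X2 (adjoint X2 v) - v) = 0 := by
    intro v hv
    set T : H3 →L[ℂ] H3 := R ∘L (X2 ∘L adjoint X2 - 1) with hT
    have hTv : T v = R (X2 (adjoint X2 v) - v) := by
      simp [hT, sub_apply, comp_apply, one_apply]
    rw [← hTv]
    have hsub : Set.range ⇑A ⊆ {w : H3 | T w = 0} := by
      rintro _ ⟨y, rfl⟩
      show T (A y) = 0
      have hcomp : R ∘L X2 ∘L adjoint X2 ∘L R = R ∘L R := by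
        have h1 : adjoint A = adjoint X2 ∘L R := by
          rw [← hX2fac, adjoint_comp, hRadj]
        have h2 : A ∘L adjoint A = R ∘L X2 ∘L (adjoint X2 ∘L R) := by
          rw [h1, ← hX2fac]; rfl
        rw [hRsq, h2]
      have hpt := congrArg (fun (S : H3 →L[ℂ] H3) => S (X2 y)) hcomp
      simp only [comp_apply] at hpt
      have : T (A y) = R (X2 (adjoint X2 (R (X2 y)))) - R (R (X2 y)) := by
        simp [hT, sub_apply, comp_apply, one_apply, map_sub, hAx]
      rw [this, hpt]
      exact sub_self _
    have hclosed : IsClosed {w : H3 | T w = 0} :=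
      isClosed_eq T.continuous continuous_const
    exact closure_minimal hsub hclosed hv
  -- closure of range A is a submodule (for closedness under subtraction)
  have hsubmem : ∀ u v : H3, u ∈ closure (Set.range ⇑A) → v ∈ closure (Set.range ⇑A) →
      u - v ∈ closure (Set.range ⇑A) := by
    intro u v hu hv
    set S : Submodule ℂ H3 := LinearMap.range (A : H2 →ₗ[ℂ] H3) with hS
    have hco : (S : Set H3) = Set.range ⇑A := by
      rw [hS, LinearMap.coe_range]; rfl
    have hclos : (S.topologicalClosure : Set H3) = closure (Set.range ⇑A) := by
      rw [Submodule.topologicalClosure_coe, hco]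
    have hu' : u ∈ S.topologicalClosure := by rw [← SetLike.mem_coe, hclos]; exact hu
    have hv' : v ∈ S.topologicalClosure := by rw [← SetLike.mem_coe, hclos]; exact hv
    have := Submodule.sub_mem _ hu' hv'
    rwa [← SetLike.mem_coe, hclos] at this
  -- Lemma C: X2 X2* = id on closure (range A)
  have hCoiso : ∀ v ∈ closure (Set.range ⇑A), X2 (adjoint X2 v) = v := by
    intro v hv
    set z : H3 := X2 (adjoint X2 v) - v with hzdef
    have hz : R z = 0 := hRz v hv
    have hzmem : z ∈ closure (Set.range ⇑A) :=
      hsubmem _ _ (hX2ran (adjoint X2 v)) hv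
    have : ⟪z, z⟫_ℂ = 0 := hAorth z hzmem z hz
    have hz0 : z = 0 := inner_self_eq_zero.mp this
    rw [hzdef] at hz0
    exact sub_eq_zero.mp hz0
  -- X2 ∘ D2 ∘ D2 = 0
  have hX2D2sq : ∀ h : H2, X2 (D2 (D2 h)) = 0 := by
    intro h
    have h1 : D2 (D2 h) = h - adjoint X2 (X2 h) := by
      have := congrArg (fun (S : H2 →L[ℂ] H2) => S h) hD2sq
      simpa [comp_apply, sub_apply, one_apply] using this
    rw [h1, map_sub, hCoiso (X2 h) (hX2ran h), sub_self]
  -- D2² = D2⁴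
  have hD2proj : ∀ h : H2, D2 (D2 h) = D2 (D2 (D2 (D2 h))) := by
    intro h
    have h1 : adjoint X2 (X2 (D2 (D2 h))) = 0 := by rw [hX2D2sq, map_zero]
    have h2 : D2 (D2 (D2 (D2 h))) = D2 (D2 h) - adjoint X2 (X2 (D2 (D2 h))) := by
      have := congrArg (fun (S : H2 →L[ℂ] H2) => S (D2 (D2 h))) hD2sq
      simpa [comp_apply, sub_apply, one_apply] using this
    rw [h2, h1, sub_zero]
  -- ‖D2 h‖ = ‖D2² h‖
  have hnormD2 : ∀ h : H2, ‖D2 h‖ ^ 2 = ‖D2 (D2 h)‖ ^ 2 := by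
    intro h
    have e : ⟪D2 h, D2 h⟫_ℂ = ⟪D2 (D2 h), D2 (D2 h)⟫_ℂ :=
      calc ⟪D2 h, D2 h⟫_ℂ = ⟪h, D2 (D2 h)⟫_ℂ := hD2inner h (D2 h)
        _ = ⟪h, D2 (D2 (D2 (D2 h)))⟫_ℂ := by rw [← hD2proj]
        _ = ⟪D2 h, D2 (D2 (D2 h))⟫_ℂ := (hD2inner h _).symm
        _ = ⟪D2 (D2 h), D2 (D2 h)⟫_ℂ := (hD2inner (D2 h) _).symm
    rw [← inner_self_eq_norm_sq (𝕜 := ℂ), ← inner_self_eq_norm_sq (𝕜 := ℂ), e]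
  -- X2 ∘ D2 = 0
  have hX2D2 : ∀ h : H2, X2 (D2 h) = 0 := by
    intro h
    have h2a : D2 (D2 (D2 h)) = D2 h - adjoint X2 (X2 (D2 h)) := by
      have := congrArg (fun (S : H2 →L[ℂ] H2) => S (D2 h)) hD2sq
      simpa [comp_apply, sub_apply, one_apply] using this
    have h2 : adjoint X2 (X2 (D2 h)) = D2 h - D2 (D2 (D2 h)) := by rw [h2a]; abel
    have key : ⟪X2 (D2 h), X2 (D2 h)⟫_ℂ = ⟪D2 h, D2 h⟫_ℂ - ⟪D2 (D2 h), D2 (D2 h)⟫_ℂ := by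
      calc ⟪X2 (D2 h), X2 (D2 h)⟫_ℂ = ⟪D2 h, adjoint X2 (X2 (D2 h))⟫_ℂ :=
            (adjoint_inner_right X2 (D2 h) (X2 (D2 h))).symm
        _ = ⟪D2 h, D2 h⟫_ℂ - ⟪D2 h, D2 (D2 (D2 h))⟫_ℂ := by rw [h2, inner_sub_right]
        _ = ⟪D2 h, D2 h⟫_ℂ - ⟪D2 (D2 h), D2 (D2 h)⟫_ℂ := by rw [hD2inner (D2 h) (D2 (D2 h))]
    have hre : ‖X2 (D2 h)‖ ^ 2 = 0 := by
      have e1 : RCLike.re ⟪X2 (D2 h), X2 (D2 h)⟫_ℂ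
          = RCLike.re (⟪D2 h, D2 h⟫_ℂ - ⟪D2 (D2 h), D2 (D2 h)⟫_ℂ) := by rw [key]
      rw [map_sub, inner_self_eq_norm_sq (𝕜 := ℂ), inner_self_eq_norm_sq (𝕜 := ℂ),
        inner_self_eq_norm_sq (𝕜 := ℂ), hnormD2 h, sub_self] at e1
      exact e1
    exact norm_eq_zero.mp ((pow_eq_zero_iff (two_ne_zero)).mp hre)

  constructor
  · -- Part 1: Pythagorean identity
    intro K _ _ _ h
    have horth : ⟪adjoint X2 (X1 h), D2 (K (D1 h))⟫_ℂ = 0 := by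
      rw [adjoint_inner_left X2 (D2 (K (D1 h))) (X1 h), hX2D2, inner_zero_right]
    have happ : (adjoint X2 ∘L X1 + D2 ∘L K ∘L D1) h
        = adjoint X2 (X1 h) + D2 (K (D1 h)) := rfl
    rw [happ]
    have hpy := norm_add_sq_eq_norm_sq_add_norm_sq_of_inner_eq_zero
      (adjoint X2 (X1 h)) (D2 (K (D1 h))) horth
    simp only [pow_two]
    exact hpy
  · refine ⟨?_, ?_, ?_⟩
    · -- A ∘ (X2* X1) = B
      refine ContinuousLinearMap.ext fun h => ?_
      have e1 : (A ∘L (adjoint X2 ∘L X1)) h = A (adjoint X2 (X1 h)) := rfl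
      rw [e1, hAx, hCoiso (X1 h) (hX1ran h)]
      exact congrArg (fun S : H1 →L[ℂ] H3 => S h) hX1fac
    · -- norm ≤ 1
      have hadj : ‖adjoint X2‖ = ‖X2‖ :=
        LinearIsometryEquiv.norm_map adjoint X2
      calc ‖adjoint X2 ∘L X1‖ ≤ ‖adjoint X2‖ * ‖X1‖ := opNorm_comp_le _ _
        _ ≤ 1 * 1 := by
            rw [hadj]
            exact mul_le_mul hX2norm hX1norm (norm_nonneg _) zero_le_one
        _ = 1 := mul_one 1
    · -- minimality
      intro X' hAX' hX'norm
      refine opNorm_le_bound _ (norm_nonneg X') fun h => ?_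
      have hadj : ‖adjoint X2‖ = ‖X2‖ :=
        LinearIsometryEquiv.norm_map adjoint X2
      have h1 : ‖(adjoint X2 ∘L X1) h‖ ≤ ‖X1 h‖ := by
        calc ‖(adjoint X2 ∘L X1) h‖ = ‖adjoint X2 (X1 h)‖ := rfl
          _ ≤ ‖adjoint X2‖ * ‖X1 h‖ := le_opNorm _ _
          _ ≤ 1 * ‖X1 h‖ := by
              rw [hadj]; exact mul_le_mul_of_nonneg_right hX2norm (norm_nonneg _)
          _ = ‖X1 h‖ := one_mul _
      have h2 : ‖X1 h‖ ≤ ‖X2 (X' h)‖ := by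
        set u : H3 := X1 h with hu
        set z : H3 := X2 (X' h) - u with hz
        have hRz0 : R z = 0 := by
          have e1 : R (X2 (X' h)) = B h := by
            rw [← hAx, ← hAX']; rfl
          have e2 : R u = B h := by rw [hu, ← hX1fac]; rfl
          rw [hz, map_sub, e1, e2, sub_self]
        have horth : ⟪u, z⟫_ℂ = 0 := hAorth u (hX1ran h) z hRz0
        have hpyth := norm_add_sq_eq_norm_sq_add_norm_sq_of_inner_eq_zero u z horth
        have huz : u + z = X2 (X' h) := by rw [hz]; abel
        rw [huz] at hpyth
        nlinarith [norm_nonneg z, norm_nonneg u, norm_nonneg (X2 (X' h))]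
      have h3 : ‖X2 (X' h)‖ ≤ ‖X' h‖ := by
        calc ‖X2 (X' h)‖ ≤ ‖X2‖ * ‖X' h‖ := le_opNorm _ _
          _ ≤ 1 * ‖X' h‖ := mul_le_mul_of_nonneg_right hX2norm (norm_nonneg _)
          _ = ‖X' h‖ := one_mul _
      calc ‖(adjoint X2 ∘L X1) h‖ ≤ ‖X1 h‖ := h1
        _ ≤ ‖X2 (X' h)‖ := h2
        _ ≤ ‖X' h‖ := h3
        _ ≤ ‖X'‖ * ‖h‖ := le_opNorm _ _
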